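/- arXiv:2012.04530 — 2 statements merged into one kernel-verified Lean document; each statement's English description precedes it below -/
import Mathlib

section
/- If M and N are transversal closed pointed cones in ℝ², then there exists a unique pair of mutually polar retractions Q and R on ℝ² such that range Q = M and range R = N. -/
open Set

variable {X : Type*} [NormedAddCommGroup X] [NormedSpace ℝ X]

/-- A retraction: continuous, positively homogeneous, idempotent map whose range is a
nonzero closed convex cone, mapping points outside the range to the boundary of the range. -/
def IsRetraction (T : X → X) : Prop :=
  Continuous T ∧
  (∀ t : ℝ, 0 ≤ t → ∀ x, T (t • x) = t • T x) ∧
  (∀ x, T (T x) = T x) ∧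
  Set.range T ≠ {0} ∧
  IsClosed (Set.range T) ∧
  Convex ℝ (Set.range T) ∧
  (∀ t : ℝ, 0 ≤ t → ∀ y ∈ Set.range T, t • y ∈ Set.range T) ∧
  (∀ x, x ∉ Set.range T → T x ∈ frontier (Set.range T))

/-- Mutually polar retractions: Q + R = I and QR = RQ = 0. -/
def MutuallyPolar (Q R : X → X) : Prop :=
  IsRetraction Q ∧ IsRetraction R ∧
  (∀ x, Q x + R x = x) ∧ (∀ x, Q (R x) = 0) ∧ (∀ x, R (Q x) = 0)

/-- M and N are transversal with transversal line Δ. -/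
def TransversalWith (M N : Set X) (Δ : Submodule ℝ X) : Prop :=
  M ∩ N = {0} ∧
  (∃ d : X, d ≠ 0 ∧ Δ = Submodule.span ℝ {d}) ∧
  ((Δ : Set X) ∩ (M \ {0})).Nonempty ∧
  ((Δ : Set X) ∩ (N \ {0})).Nonempty ∧
  ((Δ : Set X) ∩ (interior M ∪ interior N)).Nonempty

/-- M and N are transversal cones. -/
def Transversal (M N : Set X) : Prop := ∃ Δ : Submodule ℝ X, TransversalWith M N Δ

/-!
Up to exchanging `M` and `N`, transversality yields `d` in the interior of `M` with `-d ∈ N`.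
Each cone has a supporting ray on either side of the line through `d`: `M` is the sector between
rays `u'` and `u`, and `N` lies in the sector between rays `v` and `v'`, which leaves two gaps,
the wedge from `u` to `v` and the wedge from `v'` to `u'`. The retraction `Q` is the identity on
`M`, zero on `N`, and sends `α • u + β • v` (with `α, β ≥ 0`) to `α • u` on the first gap, and
similarly on the second; `R = I - Q`. Conversely, any admissible `Q₁` maps a point of a gap
wedge to the boundary of `M`, which is the union of two rays meeting only at `0`; by
continuity and the connectedness of the wedge it lands on the line of `u`, and likewise `R₁`
lands on the line of `v`, which determines `Q₁`.
-/

/-! ### Oriented area -/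

/-- The sign `s` is an orientation: a statement proved for the half-plane `0 ≤ area s d ·`
applies to the opposite one with `-s`, since `area (-s) x y = area s y x`. -/
def area (s : ℝ) (x y : ℝ × ℝ) : ℝ := s * (x.1 * y.2 - x.2 * y.1)

section Area

variable {s : ℝ}

@[simp] lemma area_self (x : ℝ × ℝ) : area s x x = 0 := by unfold area; ring

lemma area_swap (x y : ℝ × ℝ) : area s y x = -area s x y := by simp [area]; ring

@[simp] lemma area_neg_sign (x y : ℝ × ℝ) : area (-s) x y = area s y x := by simp [area]; ring

@[simp] lemma area_zero_left (y : ℝ × ℝ) : area s 0 y = 0 := by simp [area]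

@[simp] lemma area_zero_right (x : ℝ × ℝ) : area s x 0 = 0 := by simp [area]

@[simp] lemma area_add_left (x y z : ℝ × ℝ) : area s (x + y) z = area s x z + area s y z := by
  simp [area]; ring

@[simp] lemma area_add_right (x y z : ℝ × ℝ) : area s x (y + z) = area s x y + area s x z := by
  simp [area]; ring

@[simp] lemma area_smul_left (t : ℝ) (x y : ℝ × ℝ) : area s (t • x) y = t * area s x y := by
  simp [area]; ring

@[simp] lemma area_smul_right (t : ℝ) (x y : ℝ × ℝ) : area s x (t • y) = t * area s x y := by
  simp [area]; ring

@[simp] lemma area_neg_left (x y : ℝ × ℝ) : area s (-x) y = -area s x y := by simp [area]; ring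

@[simp] lemma area_neg_right (x y : ℝ × ℝ) : area s x (-y) = -area s x y := by simp [area]; ring

@[fun_prop] lemma Continuous.area {α : Type*} [TopologicalSpace α] {f g : α → ℝ × ℝ}
    (hf : Continuous f) (hg : Continuous g) : Continuous fun a => area s (f a) (g a) := by
  unfold _root_.area; fun_prop

lemma isLinearMap_area_left (w : ℝ × ℝ) : IsLinearMap ℝ fun x => area s x w :=
  ⟨fun x y => area_add_left x y w, fun t x => area_smul_left t x w⟩

lemma isLinearMap_area_right (w : ℝ × ℝ) : IsLinearMap ℝ fun x => area s w x :=
  ⟨fun x y => area_add_right w x y, fun t x => area_smul_right t w x⟩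

/-- Cramer's rule. -/
lemma area_smul_eq (u v x : ℝ × ℝ) : area s u v • x = area s x v • u + area s u x • v := by
  ext <;> simp [area] <;> ring

lemma eq_smul_add_smul {u v : ℝ × ℝ} (h : area s u v ≠ 0) (x : ℝ × ℝ) :
    x = (area s x v / area s u v) • u + (area s u x / area s u v) • v := by
  rw [div_eq_inv_mul, div_eq_inv_mul, mul_smul, mul_smul, ← smul_add, ← area_smul_eq,
    smul_smul, inv_mul_cancel₀ h, one_smul]

lemma eq_zero_of_area_eq_zero {a w p : ℝ × ℝ} (haw : area s a w ≠ 0) (ha : area s a p = 0)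
    (hw : area s w p = 0) : p = 0 := by
  have h := area_smul_eq (s := s) a w p
  rw [ha, area_swap w p, hw, neg_zero, zero_smul, zero_smul, add_zero] at h
  exact (smul_eq_zero.mp h).resolve_left haw

lemma exists_eq_smul_of_area_eq_zero (hs : s ≠ 0) {x y : ℝ × ℝ} (hx : x ≠ 0)
    (h : area s x y = 0) : ∃ c : ℝ, y = c • x := by
  obtain ⟨w, hw⟩ : ∃ w, area s x w ≠ 0 := by
    by_contra! H
    have h1 := H (1, 0)
    have h2 := H (0, 1)
    simp [area, hs] at h1 h2
    exact hx (Prod.ext h2 h1)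
  refine ⟨area s y w / area s x w, ?_⟩
  conv_lhs => rw [eq_smul_add_smul hw y]
  rw [h, zero_div, zero_smul, add_zero]

end Area

/-! ### Closed convex cones in the plane -/

open Filter Topology

structure IsConvexCone {E : Type*} [AddCommGroup E] [Module ℝ E] (K : Set E) : Prop where
  smul_mem : ∀ t : ℝ, 0 ≤ t → ∀ x ∈ K, t • x ∈ K
  add_mem : ∀ x ∈ K, ∀ y ∈ K, x + y ∈ K

namespace IsConvexCone

variable {E : Type*} [AddCommGroup E] [Module ℝ E] {K : Set E}

lemma of_convex (hconv : Convex ℝ K) (hsmul : ∀ t : ℝ, 0 ≤ t → ∀ x ∈ K, t • x ∈ K) :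
    IsConvexCone K where
  smul_mem := hsmul
  add_mem x hx y hy := by
    have h := hsmul 2 zero_le_two _ (hconv hx hy one_half_pos.le one_half_pos.le (add_halves 1))
    rwa [smul_add, smul_smul, smul_smul, mul_one_div_cancel two_ne_zero, one_smul, one_smul] at h

lemma convex (hK : IsConvexCone K) : Convex ℝ K :=
  fun _ hx _ hy a b ha hb _ => hK.add_mem _ (hK.smul_mem a ha _ hx) _ (hK.smul_mem b hb _ hy)

lemma zero_mem (hK : IsConvexCone K) {x : E} (hx : x ∈ K) : (0 : E) ∈ K := by
  simpa using hK.smul_mem 0 le_rfl x hx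

lemma mem_of_smul_mem (hK : IsConvexCone K) {t : ℝ} (ht : 0 < t) {x : E} (hx : t • x ∈ K) :
    x ∈ K := by
  simpa [smul_smul, inv_mul_cancel₀ ht.ne'] using hK.smul_mem t⁻¹ (inv_nonneg.mpr ht.le) _ hx

variable {s : ℝ} {K : Set (ℝ × ℝ)}

lemma mem_of_area_nonneg (hK : IsConvexCone K) {a b x : ℝ × ℝ} (ha : a ∈ K) (hb : b ∈ K)
    (hab : 0 < area s a b) (hax : 0 ≤ area s a x) (hxb : 0 ≤ area s x b) : x ∈ K := by
  rw [eq_smul_add_smul hab.ne' x]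
  exact hK.add_mem _ (hK.smul_mem _ (div_nonneg hxb hab.le) a ha)
    _ (hK.smul_mem _ (div_nonneg hax hab.le) b hb)

/-- By Cramer's rule `area s x g • c` is a nonnegative combination of `x` and `g`. -/
lemma area_nonpos_of_not_mem (hK : IsConvexCone K) {c x g : ℝ × ℝ} (hc : c ∉ K) (hx : x ∈ K)
    (hg : g ∈ K) (hcx : area s c x ≤ 0) (hcg : 0 ≤ area s c g) : area s x g ≤ 0 := by
  by_contra! hxg
  apply hc
  refine hK.mem_of_smul_mem hxg ?_
  have h : area s x g • c = area s c g • x + (-area s c x) • g := by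
    rw [neg_smul, eq_sub_iff_add_eq.mpr (area_smul_eq c g x).symm]
    abel
  rw [h]
  exact hK.add_mem _ (hK.smul_mem _ hcg x hx) _ (hK.smul_mem _ (neg_nonneg.mpr hcx) g hg)

end IsConvexCone

lemma eq_univ_of_zero_mem_interior {K : Set X} (hK : ∀ t : ℝ, 0 ≤ t → ∀ x ∈ K, t • x ∈ K)
    (h0 : (0 : X) ∈ interior K) : K = univ := by
  refine eq_univ_of_forall fun x => ?_
  have hlim : Tendsto (fun t : ℝ => t • x) (𝓝[>] 0) (𝓝 0) := by
    have hc : Continuous fun t : ℝ => t • x := by fun_prop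
    simpa using (hc.tendsto 0).mono_left nhdsWithin_le_nhds
  obtain ⟨t, htK, ht⟩ :=
    ((hlim.eventually (mem_interior_iff_mem_nhds.mp h0)).and self_mem_nhdsWithin).exists
  simpa [smul_smul, inv_mul_cancel₀ (ne_of_gt ht)] using hK t⁻¹ (inv_nonneg.mpr (le_of_lt ht)) _ htK

lemma area_pos_of_mem_interior {s : ℝ} {K : Set (ℝ × ℝ)} {w y : ℝ × ℝ} (hs : s ≠ 0)
    (hw : w ≠ 0) (hK : ∀ x ∈ K, 0 ≤ area s x w) (hy : y ∈ interior K) : 0 < area s y w := by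
  refine (hK y (interior_subset hy)).lt_of_ne' fun hyw => ?_
  set e : ℝ × ℝ := (-(s * w.2), s * w.1)
  have he : area s e w < 0 := by
    have hw2 : 0 < w.1 ^ 2 + w.2 ^ 2 := by
      have : w.1 ≠ 0 ∨ w.2 ≠ 0 := by
        by_contra! h
        exact hw (Prod.ext h.1 h.2)
      rcases this with h | h <;> positivity
    have : area s e w = -(s ^ 2 * (w.1 ^ 2 + w.2 ^ 2)) := by simp [e, area]; ring
    rw [this, neg_lt_zero]
    positivity
  have hlim : Tendsto (fun t : ℝ => y + t • e) (𝓝[>] 0) (𝓝 y) := by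
    have hc : Continuous fun t : ℝ => y + t • e := by fun_prop
    simpa using (hc.tendsto 0).mono_left nhdsWithin_le_nhds
  obtain ⟨t, htK, ht⟩ :=
    ((hlim.eventually (mem_interior_iff_mem_nhds.mp hy)).and self_mem_nhdsWithin).exists
  have := hK _ htK
  simp only [area_add_left, area_smul_left, hyw, zero_add] at this
  exact absurd this (not_le.mpr (mul_neg_of_pos_of_neg ht he))

namespace IsConvexCone

variable {s : ℝ} {K : Set (ℝ × ℝ)}

/-- The points of `K` on the affine line `area s c · = 1` through `x₀` are `x₀ + r • c` for `r` in
a closed interval, bounded above since `c ∉ K`; its upper end spans the supporting ray. -/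
lemma exists_supporting_ray_of_area_eq_one (hK : IsConvexCone K) (hKc : IsClosed K)
    {c x₀ : ℝ × ℝ} (hc : c ∉ K) (hx₀ : x₀ ∈ K) (hcx₀ : area s c x₀ = 1) :
    ∃ g ∈ K, area s c g = 1 ∧ ∀ x ∈ K, 0 < area s c x → area s x g ≤ 0 := by
  set I := {r : ℝ | x₀ + r • c ∈ K}
  have hI0 : (0 : ℝ) ∈ I := by simpa [I] using hx₀
  have hIc : IsClosed I := hKc.preimage (by fun_prop : Continuous fun r : ℝ => x₀ + r • c)
  have hIb : BddAbove I := by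
    by_contra hunb
    have hIci : ∀ r, 0 ≤ r → r ∈ I := by
      intro r hr
      obtain ⟨r', hr'I, hrr'⟩ := not_bddAbove_iff.mp hunb r
      have hr' : 0 < r' := hr.trans_lt hrr'
      have h : x₀ + r • c = (1 - r / r') • x₀ + (r / r') • (x₀ + r' • c) := by
        rw [smul_add, smul_smul, div_mul_cancel₀ r hr'.ne']
        module
      show x₀ + r • c ∈ K
      rw [h]
      exact hK.add_mem _ (hK.smul_mem _ (sub_nonneg.mpr ((div_le_one hr').mpr hrr'.le)) _ hx₀) _
        (hK.smul_mem _ (div_nonneg hr hr'.le) _ hr'I)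
    refine hc (hKc.mem_of_tendsto (f := fun r : ℝ => r⁻¹ • x₀ + c) (b := Filter.atTop) ?_ ?_)
    · simpa using ((tendsto_inv_atTop_zero (𝕜 := ℝ)).smul_const x₀).add_const c
    · filter_upwards [Filter.eventually_gt_atTop 0] with r hr
      have h : r⁻¹ • x₀ + c = r⁻¹ • (x₀ + r • c) := by
        rw [smul_add, smul_smul, inv_mul_cancel₀ hr.ne', one_smul]
      rw [h]
      exact hK.smul_mem _ (inv_nonneg.mpr hr.le) _ (hIci r hr.le)
  set ρ := sSup I
  have hρ : x₀ + ρ • c ∈ K := hIc.csSup_mem ⟨0, hI0⟩ hIb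
  refine ⟨x₀ + ρ • c, hρ, by simp [hcx₀], fun x hx hcx => ?_⟩
  have hxeq : x = area s c x • x₀ + area s x x₀ • c := by
    simp only [area] at hcx₀ ⊢
    ext
    · simp only [Prod.fst_add, Prod.smul_fst, smul_eq_mul]; linear_combination (-x.1) * hcx₀
    · simp only [Prod.snd_add, Prod.smul_snd, smul_eq_mul]; linear_combination (-x.2) * hcx₀
  have hr : area s x x₀ / area s c x ∈ I := by
    refine hK.mem_of_smul_mem hcx ?_
    rw [smul_add, smul_smul, mul_div_cancel₀ _ hcx.ne', ← hxeq]
    exact hx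
  have hle := le_csSup hIb hr
  rw [div_le_iff₀ hcx] at hle
  simp only [area_add_right, area_smul_right, area_swap c x] at hle ⊢
  linarith

lemma exists_supporting_ray (hK : IsConvexCone K) (hKc : IsClosed K) {c p : ℝ × ℝ}
    (hc : c ∉ K) (hp : p ∈ K) (hp0 : p ≠ 0) (hcp : 0 ≤ area s c p) :
    ∃ g ∈ K, g ≠ 0 ∧ 0 ≤ area s c g ∧ ∀ x ∈ K, area s x g ≤ 0 := by
  suffices ∃ g ∈ K, g ≠ 0 ∧ 0 ≤ area s c g ∧ ∀ x ∈ K, 0 < area s c x → area s x g ≤ 0 by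
    obtain ⟨g, hg, hg0, hcg, H⟩ := this
    refine ⟨g, hg, hg0, hcg, fun x hx => ?_⟩
    rcases le_or_gt (area s c x) 0 with h | h
    · exact hK.area_nonpos_of_not_mem hc hx hg h hcg
    · exact H x hx h
  by_cases hpos : ∃ x₀ ∈ K, 0 < area s c x₀
  · obtain ⟨x₀, hx₀, hcx₀⟩ := hpos
    obtain ⟨g, hg, hcg, H⟩ := hK.exists_supporting_ray_of_area_eq_one hKc hc
      (hK.smul_mem _ (inv_nonneg.mpr hcx₀.le) x₀ hx₀)
      (by rw [area_smul_right, inv_mul_cancel₀ hcx₀.ne'])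
    exact ⟨g, hg, by rintro rfl; simp at hcg, hcg.ge.trans' zero_le_one, H⟩
  · push Not at hpos
    exact ⟨p, hp, hp0, hcp, fun x hx hcx => absurd (hpos x hx) hcx.not_ge⟩

lemma area_eq_zero_of_degenerate_sector (hK : IsConvexCone K) (hs : s ≠ 0)
    (hsal : ∀ x ∈ K, -x ∈ K → x = 0) {a b : ℝ × ℝ} (ha : a ∈ K) (hb : b ∈ K) (ha0 : a ≠ 0)
    (hb0 : b ≠ 0) (hsub : ∀ x ∈ K, 0 ≤ area s a x ∧ 0 ≤ area s x b) (hab : area s a b = 0)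
    {x : ℝ × ℝ} (hx : x ∈ K) : area s a x = 0 := by
  obtain ⟨c, rfl⟩ := exists_eq_smul_of_area_eq_zero hs ha0 hab
  have hc : 0 < c := by
    rcases lt_trichotomy c 0 with hc | rfl | hc
    · refine absurd (hsal a ha (hK.mem_of_smul_mem (neg_pos.mpr hc) ?_)) ha0
      rwa [smul_neg, neg_smul, neg_neg]
    · simp at hb0
    · exact hc
  have h := hsub x hx
  rw [area_smul_right, area_swap a x] at h
  nlinarith [h.1, h.2]

lemma area_eq_zero_or_of_mem_frontier (hK : IsConvexCone K) (hKc : IsClosed K) {a b : ℝ × ℝ}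
    (ha : a ∈ K) (hb : b ∈ K) (hab : 0 < area s a b)
    (hsub : ∀ x ∈ K, 0 ≤ area s a x ∧ 0 ≤ area s x b) {p : ℝ × ℝ} (hp : p ∈ frontier K) :
    area s a p = 0 ∨ area s p b = 0 := by
  rw [hKc.frontier_eq] at hp
  by_contra! h
  refine hp.2 (interior_maximal (t := {x | 0 < area s a x} ∩ {x | 0 < area s x b}) ?_ ?_ ?_)
  · exact fun x hx => hK.mem_of_area_nonneg ha hb hab hx.1.le hx.2.le
  · exact (isOpen_lt continuous_const (by fun_prop)).inter
      (isOpen_lt continuous_const (by fun_prop))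
  · exact ⟨(hsub p hp.1).1.lt_of_ne' h.1, (hsub p hp.1).2.lt_of_ne' h.2⟩

end IsConvexCone

/-! ### Mutually polar retractions -/

namespace IsRetraction

variable {T : X → X}

lemma continuous (hT : IsRetraction T) : Continuous T := hT.1

lemma apply_of_mem_range (hT : IsRetraction T) {y : X} (hy : y ∈ range T) : T y = y := by
  obtain ⟨x, rfl⟩ := hy
  exact hT.2.2.1 x

lemma apply_mem_frontier (hT : IsRetraction T) {x : X} (hx : x ∉ range T) :
    T x ∈ frontier (range T) :=
  hT.2.2.2.2.2.2.2 x hx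

end IsRetraction

namespace MutuallyPolar

variable {Q R : X → X}

lemma add_apply (h : MutuallyPolar Q R) (x : X) : Q x + R x = x := h.2.2.1 x

lemma symm (h : MutuallyPolar Q R) : MutuallyPolar R Q :=
  ⟨h.2.1, h.1, fun x => by rw [add_comm]; exact h.add_apply x, h.2.2.2.2, h.2.2.2.1⟩

lemma apply_eq_zero_of_mem_range (h : MutuallyPolar Q R) {y : X} (hy : y ∈ range R) :
    Q y = 0 := by
  obtain ⟨x, rfl⟩ := hy
  exact h.2.2.2.1 x

lemma mem_range_of_apply_eq_zero (h : MutuallyPolar Q R) {y : X} (hy : Q y = 0) :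
    y ∈ range R :=
  ⟨y, by simpa [hy] using h.add_apply y⟩

end MutuallyPolar

lemma IsPreconnected.subset_of_isClosed_cover {α : Type*} [TopologicalSpace α] {T A B : Set α}
    (hT : IsPreconnected T) (hA : IsClosed A) (hB : IsClosed B) (hcov : T ⊆ A ∪ B)
    (hdisj : ∀ y ∈ T, y ∈ A → y ∉ B) (hne : (T ∩ A).Nonempty) : T ⊆ A := by
  intro y hy
  by_contra hyA
  obtain ⟨z, hzT, hzA, hzB⟩ := isPreconnected_closed_iff.mp hT A B hA hB hcov hne
    ⟨y, hy, (hcov hy).resolve_left hyA⟩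
  exact hdisj z hzT hzA hzB

/-- On the wedge from `a ∈ range P` to `b`, the values of `P` lie on the boundary lines of
`range P` through `a` and `w`, which meet only at `0`; and `P y = 0` would put `y` into
`range R`. So by connectedness they all lie on the line through `a`. -/
lemma MutuallyPolar.area_apply_eq_zero {P R : ℝ × ℝ → ℝ × ℝ} (h : MutuallyPolar P R) {s : ℝ}
    {a b w : ℝ × ℝ} (ha : a ∈ range P) (hab : 0 < area s a b) (haw : area s a w ≠ 0)
    (hP : ∀ x ∈ range P, 0 ≤ area s x a) (hR : ∀ x ∈ range R, area s x b ≤ 0)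
    (hfr : ∀ p ∈ frontier (range P), area s a p = 0 ∨ area s w p = 0) {y : ℝ × ℝ}
    (hay : 0 ≤ area s a y) (hyb : 0 < area s y b) : area s a (P y) = 0 := by
  have hPc : Continuous P := h.1.continuous
  have hT : IsPreconnected ({z | 0 ≤ area s a z} ∩ {z | 0 < area s z b}) :=
    ((convex_halfSpace_ge (isLinearMap_area_right a) 0).inter
      (convex_halfSpace_gt (isLinearMap_area_left b) 0)).isPreconnected
  refine hT.subset_of_isClosed_cover (A := {z | area s a (P z) = 0})
    (B := {z | area s w (P z) = 0}) (isClosed_eq (by fun_prop) continuous_const)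
    (isClosed_eq (by fun_prop) continuous_const) ?_ ?_ ?_ ⟨hay, hyb⟩
  · rintro z ⟨(haz : 0 ≤ area s a z), -⟩
    by_cases hzP : z ∈ range P
    · left
      have := hP z hzP
      rw [area_swap] at this
      show area s a (P z) = 0
      rw [h.1.apply_of_mem_range hzP]
      linarith
    by_cases hzR : z ∈ range R
    · left
      show area s a (P z) = 0
      rw [h.apply_eq_zero_of_mem_range hzR, area_zero_right]
    exact hfr _ (h.1.apply_mem_frontier hzP)
  · rintro z ⟨-, (hzb : 0 < area s z b)⟩ hA hB
    have := hR z (h.mem_range_of_apply_eq_zero (eq_zero_of_area_eq_zero haw hA hB))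
    linarith
  · exact ⟨a, ⟨by simp, hab⟩, by simp [h.1.apply_of_mem_range ha]⟩

lemma existsUnique_mutuallyPolar_comm {M N : Set X}
    (h : ∃! p : (X → X) × (X → X), MutuallyPolar p.1 p.2 ∧ range p.1 = N ∧ range p.2 = M) :
    ∃! p : (X → X) × (X → X), MutuallyPolar p.1 p.2 ∧ range p.1 = M ∧ range p.2 = N :=
  ((Equiv.prodComm _ _).existsUnique_congr fun _ =>
    ⟨fun ⟨h, hN, hM⟩ => ⟨h.symm, hM, hN⟩, fun ⟨h, hM, hN⟩ => ⟨h.symm, hN, hM⟩⟩).mp h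

/-! ### Reduction to a line through an interior point -/

lemma exists_eq_smul_of_mem_span_singleton {d₀ x g : X} (hx : x ∈ Submodule.span ℝ {d₀})
    (hg : g ∈ Submodule.span ℝ {d₀}) (hg0 : g ≠ 0) : ∃ r : ℝ, x = r • g := by
  obtain ⟨a, rfl⟩ := Submodule.mem_span_singleton.mp hx
  obtain ⟨c, rfl⟩ := Submodule.mem_span_singleton.mp hg
  have hc : c ≠ 0 := by
    rintro rfl
    simp at hg0
  exact ⟨a / c, by rw [smul_smul, div_mul_cancel₀ a hc]⟩

lemma neg_mem_of_eq_smul {K L : Set X} (hK : IsConvexCone K) (hL : IsConvexCone L)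
    (hKL : ∀ x ∈ K, x ∈ L → x = 0) {g f : X} (hg : g ∈ K) (hf : f ∈ L) (hf0 : f ≠ 0) {r : ℝ}
    (hfg : f = r • g) : -g ∈ L := by
  rcases lt_or_ge r 0 with hr | hr
  · exact hL.mem_of_smul_mem (neg_pos.mpr hr) (by rwa [smul_neg, neg_smul, neg_neg, ← hfg])
  · exact absurd (hKL f (hfg ▸ hK.smul_mem r hr g hg) hf) hf0

lemma exists_mem_interior_of_transversalWith {M N : Set X} {Δ : Submodule ℝ X}
    (hM : IsConvexCone M) (hN : IsConvexCone N) (hMs : ∀ x ∈ M, -x ∈ M → x = 0)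
    (hNs : ∀ x ∈ N, -x ∈ N → x = 0) (h : TransversalWith M N Δ) :
    ∃ d : X, d ≠ 0 ∧ (d ∈ interior M ∧ -d ∈ N ∨ d ∈ interior N ∧ -d ∈ M) := by
  obtain ⟨hMN, ⟨d₀, -, rfl⟩, ⟨e, heΔ, heM, he0⟩, ⟨f, hfΔ, hfN, hf0⟩, ⟨g, hgΔ, hg⟩⟩ := h
  have hMN' : ∀ x ∈ M, x ∈ N → x = 0 := fun x hx hx' => hMN.subset ⟨hx, hx'⟩
  have hg0 : g ≠ 0 := by
    rintro rfl
    rcases hg with hg | hg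
    · exact he0 (hMs e heM (by simp [eq_univ_of_zero_mem_interior hM.smul_mem hg]))
    · exact hf0 (hNs f hfN (by simp [eq_univ_of_zero_mem_interior hN.smul_mem hg]))
  refine ⟨g, hg0, hg.imp (fun hgM => ⟨hgM, ?_⟩) (fun hgN => ⟨hgN, ?_⟩)⟩
  · obtain ⟨r, hr⟩ := exists_eq_smul_of_mem_span_singleton hfΔ hgΔ hg0
    exact neg_mem_of_eq_smul hM hN hMN' (interior_subset hgM) hfN hf0 hr
  · obtain ⟨r, hr⟩ := exists_eq_smul_of_mem_span_singleton heΔ hgΔ hg0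
    exact neg_mem_of_eq_smul hN hM (fun x hx hx' => hMN' x hx' hx) (interior_subset hgN) heM he0
      hr

/-! ### The retraction of a transversal configuration -/

/-- Writing `x = α • u + β • v`, this is `max α 0 • u + min β 0 • v`. -/
noncomputable def halfRetraction (s : ℝ) (u v x : ℝ × ℝ) : ℝ × ℝ :=
  max (area s x v / area s u v) 0 • u + min (area s u x / area s u v) 0 • v

section HalfRetraction

variable {s : ℝ} {u v : ℝ × ℝ}

lemma halfRetraction_smul {t : ℝ} (ht : 0 ≤ t) (x : ℝ × ℝ) :
    halfRetraction s u v (t • x) = t • halfRetraction s u v x := by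
  simp only [halfRetraction, area_smul_left, area_smul_right, mul_div_assoc, smul_add, smul_smul,
    mul_max_of_nonneg _ _ ht, mul_min_of_nonneg _ _ ht, mul_zero]

lemma continuous_halfRetraction : Continuous (halfRetraction s u v) := by
  unfold halfRetraction
  fun_prop

lemma sub_halfRetraction (h : area s u v ≠ 0) (x : ℝ × ℝ) :
    x - halfRetraction s u v x =
      min (area s x v / area s u v) 0 • u + max (area s u x / area s u v) 0 • v := by
  have hx := eq_smul_add_smul h x
  unfold halfRetraction
  generalize area s x v / area s u v = α at hx ⊢
  generalize area s u x / area s u v = β at hx ⊢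
  rw [hx]
  linear_combination (norm := module) -((max_add_min α 0) • u) - (min_add_max β 0) • v

lemma halfRetraction_of_area_pos (huv : 0 < area s u v) {x : ℝ × ℝ} (hux : 0 < area s u x) :
    halfRetraction s u v x = max (area s x v / area s u v) 0 • u := by
  rw [halfRetraction, min_eq_right (div_pos hux huv).le, zero_smul, add_zero]

lemma sub_halfRetraction_of_area_nonneg (huv : 0 < area s u v) {x : ℝ × ℝ}
    (hxv : 0 ≤ area s x v) :
    x - halfRetraction s u v x = max (area s u x / area s u v) 0 • v := by
  rw [sub_halfRetraction huv.ne', min_eq_right (div_nonneg hxv huv.le), zero_smul, zero_add]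

end HalfRetraction

noncomputable def retractionQ (s : ℝ) (d u v u' v' : ℝ × ℝ) (x : ℝ × ℝ) : ℝ × ℝ :=
  if 0 ≤ area s d x then halfRetraction s u v x else halfRetraction (-s) u' v' x

/-- For `s = 1`: `M` is the sector swept counterclockwise from `u'` to `u`, `N` lies in the
sector from `v` to `v'`, and the rays `u', d, u, v, -d, v'` come in counterclockwise order.
The half-plane `0 ≤ area s d ·` contains `u` and `v`, the other one `u'` and `v'`. -/
structure Config (s : ℝ) (M N : Set (ℝ × ℝ)) (d u v u' v' : ℝ × ℝ) : Prop where
  isClosed_M : IsClosed M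
  isClosed_N : IsClosed N
  cone_M : IsConvexCone M
  cone_N : IsConvexCone N
  salient_M : ∀ x ∈ M, -x ∈ M → x = 0
  salient_N : ∀ x ∈ N, -x ∈ N → x = 0
  inter : ∀ x ∈ M, x ∈ N → x = 0
  d_mem : d ∈ M
  neg_d_mem : -d ∈ N
  u_mem : u ∈ M
  u'_mem : u' ∈ M
  v_mem : v ∈ N
  v'_mem : v' ∈ N
  v_ne : v ≠ 0
  v'_ne : v' ≠ 0
  area_d_u : 0 < area s d u
  area_u'_d : 0 < area s u' d
  area_d_v : 0 ≤ area s d v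
  area_v'_d : 0 ≤ area s v' d
  area_u'_le : ∀ x ∈ M, 0 ≤ area s u' x
  area_le_u : ∀ x ∈ M, 0 ≤ area s x u
  area_v_le : ∀ x ∈ N, 0 ≤ area s v x
  area_le_v' : ∀ x ∈ N, 0 ≤ area s x v'

namespace Config

variable {s : ℝ} {M N : Set (ℝ × ℝ)} {d u v u' v' : ℝ × ℝ}

/-- Reversing the orientation exchanges the two half-planes. -/
lemma flip (C : Config s M N d u v u' v') : Config (-s) M N d u' v' u v where
  isClosed_M := C.isClosed_M
  isClosed_N := C.isClosed_N
  cone_M := C.cone_M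
  cone_N := C.cone_N
  salient_M := C.salient_M
  salient_N := C.salient_N
  inter := C.inter
  d_mem := C.d_mem
  neg_d_mem := C.neg_d_mem
  u_mem := C.u'_mem
  u'_mem := C.u_mem
  v_mem := C.v'_mem
  v'_mem := C.v_mem
  v_ne := C.v'_ne
  v'_ne := C.v_ne
  area_d_u := by simpa using C.area_u'_d
  area_u'_d := by simpa using C.area_d_u
  area_d_v := by simpa using C.area_v'_d
  area_v'_d := by simpa using C.area_d_v
  area_u'_le x hx := by simpa using C.area_le_u x hx
  area_le_u x hx := by simpa using C.area_u'_le x hx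
  area_v_le x hx := by simpa using C.area_le_v' x hx
  area_le_v' x hx := by simpa using C.area_v_le x hx

variable (C : Config s M N d u v u' v')
include C

lemma s_ne : s ≠ 0 := by
  rintro rfl
  simpa [area] using C.area_d_u

lemma u_ne : u ≠ 0 := by
  rintro rfl
  simpa using C.area_d_u

lemma area_u_v : 0 < area s u v := by
  by_contra! h
  refine C.v_ne (C.inter v (C.cone_M.mem_of_area_nonneg C.d_mem C.u_mem C.area_d_u C.area_d_v ?_)
    C.v_mem)
  rw [area_swap]
  linarith

lemma area_u'_u : 0 < area s u' u := by
  by_contra! h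
  refine C.u_ne (C.salient_M u C.u_mem
    (C.cone_M.mem_of_area_nonneg C.u'_mem C.d_mem C.area_u'_d ?_ ?_))
  · simpa using h
  · simpa [area_swap u d] using C.area_d_u.le

lemma mem_M_of_area {x : ℝ × ℝ} (hdx : 0 ≤ area s d x) (hxu : 0 ≤ area s x u) : x ∈ M :=
  C.cone_M.mem_of_area_nonneg C.d_mem C.u_mem C.area_d_u hdx hxu

lemma area_v_nonneg {x : ℝ × ℝ} (hdx : 0 ≤ area s d x) (hxu : 0 ≤ area s x u) :
    0 ≤ area s x v := by
  rw [eq_smul_add_smul C.area_d_u.ne' x]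
  simp only [area_add_left, area_smul_left]
  exact add_nonneg (mul_nonneg (div_nonneg hxu C.area_d_u.le) C.area_d_v)
    (mul_nonneg (div_nonneg hdx C.area_d_u.le) C.area_u_v.le)

lemma mem_N_of_area {x : ℝ × ℝ} (hdx : 0 ≤ area s d x) (hxv : area s x v < 0) : x ∈ N := by
  have hdv : 0 < area s d v := by
    have hux : 0 < area s u x := by
      by_contra! h
      exact hxv.not_ge (C.area_v_nonneg hdx (by rw [area_swap]; linarith))
    have hplucker : area s d v * area s u x =
        area s x v * area s u d + area s d x * area s u v := by simp only [area]; ring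
    rw [area_swap d u] at hplucker
    nlinarith [C.area_d_u, C.area_u_v, C.area_d_v]
  exact C.cone_N.mem_of_area_nonneg C.v_mem C.neg_d_mem (by simpa [area_swap v d] using hdv)
    (by rw [area_swap]; linarith) (by simpa [area_swap d x] using hdx)

lemma area_u_nonneg_of_mem_N {x : ℝ × ℝ} (hdx : 0 ≤ area s d x) (hxN : x ∈ N) :
    0 ≤ area s u x := by
  by_contra! h
  have hx := C.inter x (C.mem_M_of_area hdx (by rw [area_swap]; linarith)) hxN
  simp [hx] at h



lemma halfRetraction_eq_self {x : ℝ × ℝ} (hdx : 0 ≤ area s d x) (hxM : x ∈ M) :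
    halfRetraction s u v x = x := by
  have hxu := C.area_le_u x hxM
  rw [halfRetraction, max_eq_left (div_nonneg (C.area_v_nonneg hdx hxu) C.area_u_v.le),
    min_eq_left (div_nonpos_of_nonpos_of_nonneg (by rw [area_swap]; linarith) C.area_u_v.le)]
  exact (eq_smul_add_smul C.area_u_v.ne' x).symm

lemma halfRetraction_eq_zero {x : ℝ × ℝ} (hdx : 0 ≤ area s d x) (hxN : x ∈ N) :
    halfRetraction s u v x = 0 := by
  have hvx := C.area_v_le x hxN
  rw [halfRetraction, max_eq_right (div_nonpos_of_nonpos_of_nonneg (by rw [area_swap]; linarith)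
      C.area_u_v.le),
    min_eq_right (div_nonneg (C.area_u_nonneg_of_mem_N hdx hxN) C.area_u_v.le)]
  simp

lemma halfRetraction_mem {x : ℝ × ℝ} (hdx : 0 ≤ area s d x) : halfRetraction s u v x ∈ M := by
  rcases le_or_gt (area s u x) 0 with hux | hux
  · have hxM := C.mem_M_of_area hdx (by rw [area_swap]; linarith)
    rwa [C.halfRetraction_eq_self hdx hxM]
  · rw [halfRetraction_of_area_pos C.area_u_v hux]
    exact C.cone_M.smul_mem _ (le_max_right _ _) u C.u_mem

lemma sub_halfRetraction_mem {x : ℝ × ℝ} (hdx : 0 ≤ area s d x) :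
    x - halfRetraction s u v x ∈ N := by
  rcases lt_or_ge (area s x v) 0 with hxv | hxv
  · have hxN := C.mem_N_of_area hdx hxv
    rwa [C.halfRetraction_eq_zero hdx hxN, sub_zero]
  · rw [sub_halfRetraction_of_area_nonneg C.area_u_v hxv]
    exact C.cone_N.smul_mem _ (le_max_right _ _) v C.v_mem

lemma area_halfRetraction_u {x : ℝ × ℝ} (hdx : 0 ≤ area s d x) (hxM : x ∉ M) :
    area s (halfRetraction s u v x) u = 0 := by
  have hux : 0 < area s u x := by
    by_contra! h
    exact hxM (C.mem_M_of_area hdx (by rw [area_swap]; linarith))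
  simp [halfRetraction_of_area_pos C.area_u_v hux]

lemma area_v_sub_halfRetraction {x : ℝ × ℝ} (hdx : 0 ≤ area s d x) (hxN : x ∉ N) :
    area s v (x - halfRetraction s u v x) = 0 := by
  have hxv : 0 ≤ area s x v := by
    by_contra! h
    exact hxN (C.mem_N_of_area hdx h)
  rw [sub_halfRetraction_of_area_nonneg C.area_u_v hxv]
  simp

lemma halfRetraction_smul_d (c : ℝ) : halfRetraction s u v (c • d) = max c 0 • d := by
  rcases le_total 0 c with hc | hc
  · rw [halfRetraction_smul hc, C.halfRetraction_eq_self (by simp) C.d_mem, max_eq_left hc]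
  · rw [show c • d = (-c) • -d by rw [smul_neg, neg_smul, neg_neg],
      halfRetraction_smul (neg_nonneg.mpr hc), C.halfRetraction_eq_zero (by simp) C.neg_d_mem,
      max_eq_right hc, smul_zero, zero_smul]

lemma area_pos_of_not_mem {x : ℝ × ℝ} (hdx : 0 ≤ area s d x) (hxM : x ∉ M) (hxN : x ∉ N) :
    0 < area s u x ∧ 0 < area s x v := by
  have hux : 0 < area s u x := by
    by_contra! h
    exact hxM (C.mem_M_of_area hdx (by rw [area_swap]; linarith))
  refine ⟨hux, ?_⟩
  rcases lt_trichotomy (area s x v) 0 with hxv | hxv | hxv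
  · exact absurd (C.mem_N_of_area hdx hxv) hxN
  · obtain ⟨c, rfl⟩ := exists_eq_smul_of_area_eq_zero C.s_ne C.v_ne
      (by rw [area_swap, hxv, neg_zero])
    rw [area_smul_right] at hux
    exact absurd (C.cone_N.smul_mem c (pos_of_mul_pos_left hux C.area_u_v.le).le v C.v_mem) hxN
  · exact hxv

lemma area_eq_zero_or_of_mem_frontier_M {p : ℝ × ℝ} (hp : p ∈ frontier M) :
    area s u p = 0 ∨ area s u' p = 0 := by
  have := C.cone_M.area_eq_zero_or_of_mem_frontier C.isClosed_M C.u'_mem C.u_mem C.area_u'_u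
    (fun x hx => ⟨C.area_u'_le x hx, C.area_le_u x hx⟩) hp
  rw [area_swap u p, neg_eq_zero] at this
  exact this.symm

lemma exists_area_eq_zero_or_of_mem_frontier_N :
    ∃ w, area s v w ≠ 0 ∧ ∀ p ∈ frontier N, area s v p = 0 ∨ area s w p = 0 := by
  by_cases h : 0 < area s v v'
  · refine ⟨v', h.ne', fun p hp => ?_⟩
    have := C.cone_N.area_eq_zero_or_of_mem_frontier C.isClosed_N C.v_mem C.v'_mem h
      (fun x hx => ⟨C.area_v_le x hx, C.area_le_v' x hx⟩) hp
    rwa [area_swap v' p, neg_eq_zero] at this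
  · refine ⟨u, by rw [area_swap]; exact neg_ne_zero.mpr C.area_u_v.ne', fun p hp => Or.inl ?_⟩
    have hpN : p ∈ N := C.isClosed_N.frontier_subset hp
    exact C.cone_N.area_eq_zero_of_degenerate_sector C.s_ne C.salient_N C.v_mem C.v'_mem C.v_ne
      C.v'_ne (fun x hx => ⟨C.area_v_le x hx, C.area_le_v' x hx⟩)
      (le_antisymm (not_lt.mp h) (C.area_v_le v' C.v'_mem)) hpN



lemma eq_halfRetraction {P R : ℝ × ℝ → ℝ × ℝ} (h : MutuallyPolar P R) (hP : range P = M)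
    (hR : range R = N) {x : ℝ × ℝ} (hdx : 0 ≤ area s d x) (hxM : x ∉ M) (hxN : x ∉ N) :
    P x = halfRetraction s u v x := by
  obtain ⟨hux, hxv⟩ := C.area_pos_of_not_mem hdx hxM hxN
  subst hP hR
  have hPx : area s u (P x) = 0 := by
    refine h.area_apply_eq_zero (w := u') C.u_mem C.area_u_v
      (by rw [area_swap]; exact neg_ne_zero.mpr C.area_u'_u.ne') C.area_le_u (fun y hy => ?_)
      (fun p hp => C.area_eq_zero_or_of_mem_frontier_M hp) hux.le hxv
    have := C.area_v_le y hy
    rw [area_swap] at this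
    linarith
  obtain ⟨w, hvw, hfrN⟩ := C.exists_area_eq_zero_or_of_mem_frontier_N
  have hRx : area s (R x) v = 0 := by
    -- the same argument for `R` and `N`, with the orientation reversed
    have := h.symm.area_apply_eq_zero (s := -s) (a := v) (b := u) (w := w) C.v_mem
      (by simpa using C.area_u_v) (by simpa [area_swap v w] using hvw)
      (fun y hy => by simpa using C.area_v_le y hy)
      (fun y hy => by have := C.area_le_u y hy; simp only [area_neg_sign]; rw [area_swap]; linarith)
      (fun p hp => by simpa [area_swap _ p] using hfrN p hp)
      (by simpa using hxv.le) (by simpa using hux)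
    simpa using this
  obtain ⟨a, ha⟩ := exists_eq_smul_of_area_eq_zero C.s_ne C.u_ne hPx
  obtain ⟨b, hb⟩ := exists_eq_smul_of_area_eq_zero C.s_ne C.v_ne
    (by rw [area_swap, hRx, neg_zero])
  have hxv' : area s x v = a * area s u v := by
    rw [← h.add_apply x, ha, hb]
    simp
  rw [ha, halfRetraction_of_area_pos C.area_u_v hux, hxv', mul_div_cancel_right₀ _ C.area_u_v.ne',
    max_eq_left (pos_of_mul_pos_left (hxv' ▸ hxv) C.area_u_v.le).le]


lemma d_ne : d ≠ 0 := by
  rintro rfl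
  simpa using C.area_d_u

lemma exists_retractionQ_eq (x : ℝ × ℝ) : ∃ t a b a' b', Config t M N d a b a' b' ∧
    0 ≤ area t d x ∧ retractionQ s d u v u' v' x = halfRetraction t a b x := by
  by_cases hdx : 0 ≤ area s d x
  · exact ⟨s, u, v, u', v', C, hdx, if_pos hdx⟩
  · refine ⟨-s, u', v', u, v, C.flip, ?_, if_neg hdx⟩
    rw [area_neg_sign, area_swap]
    linarith

lemma retractionQ_mem (x : ℝ × ℝ) : retractionQ s d u v u' v' x ∈ M := by
  obtain ⟨t, a, b, a', b', C', hdx, hx⟩ := C.exists_retractionQ_eq x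
  exact hx ▸ C'.halfRetraction_mem hdx

lemma retractionQ_eq_self {x : ℝ × ℝ} (hx : x ∈ M) : retractionQ s d u v u' v' x = x := by
  obtain ⟨t, a, b, a', b', C', hdx, hQ⟩ := C.exists_retractionQ_eq x
  exact hQ ▸ C'.halfRetraction_eq_self hdx hx

lemma retractionQ_eq_zero {x : ℝ × ℝ} (hx : x ∈ N) : retractionQ s d u v u' v' x = 0 := by
  obtain ⟨t, a, b, a', b', C', hdx, hQ⟩ := C.exists_retractionQ_eq x
  exact hQ ▸ C'.halfRetraction_eq_zero hdx hx

lemma sub_retractionQ_mem (x : ℝ × ℝ) : x - retractionQ s d u v u' v' x ∈ N := by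
  obtain ⟨t, a, b, a', b', C', hdx, hQ⟩ := C.exists_retractionQ_eq x
  exact hQ ▸ C'.sub_halfRetraction_mem hdx

lemma retractionQ_mem_frontier {x : ℝ × ℝ} (hx : x ∉ M) :
    retractionQ s d u v u' v' x ∈ frontier M := by
  obtain ⟨t, a, b, a', b', C', hdx, hQ⟩ := C.exists_retractionQ_eq x
  rw [hQ, C.isClosed_M.frontier_eq]
  exact ⟨C'.halfRetraction_mem hdx, fun hint => (area_pos_of_mem_interior C'.s_ne C'.u_ne
    C'.area_le_u hint).ne' (C'.area_halfRetraction_u hdx hx)⟩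

lemma sub_retractionQ_mem_frontier {x : ℝ × ℝ} (hx : x ∉ N) :
    x - retractionQ s d u v u' v' x ∈ frontier N := by
  obtain ⟨t, a, b, a', b', C', hdx, hQ⟩ := C.exists_retractionQ_eq x
  rw [hQ, C.isClosed_N.frontier_eq]
  refine ⟨C'.sub_halfRetraction_mem hdx, fun hint => ?_⟩
  have := area_pos_of_mem_interior (neg_ne_zero.mpr C'.s_ne) C'.v_ne
    (fun y hy => by simpa using C'.area_v_le y hy) hint
  rw [area_neg_sign, C'.area_v_sub_halfRetraction hdx hx] at this
  exact this.false

lemma continuous_retractionQ : Continuous (retractionQ s d u v u' v') := by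
  refine Continuous.if_le continuous_halfRetraction continuous_halfRetraction continuous_const
    (by fun_prop) fun x hx => ?_
  obtain ⟨c, rfl⟩ := exists_eq_smul_of_area_eq_zero C.s_ne C.d_ne hx.symm
  rw [C.halfRetraction_smul_d, C.flip.halfRetraction_smul_d]

lemma retractionQ_smul {t : ℝ} (ht : 0 ≤ t) (x : ℝ × ℝ) :
    retractionQ s d u v u' v' (t • x) = t • retractionQ s d u v u' v' x := by
  rcases ht.eq_or_lt with rfl | ht
  · rw [zero_smul, zero_smul, C.retractionQ_eq_self (C.cone_M.zero_mem C.d_mem)]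
  · simp only [retractionQ, area_smul_right, mul_nonneg_iff_of_pos_left ht]
    split_ifs <;> exact halfRetraction_smul ht.le x

theorem mutuallyPolar :
    MutuallyPolar (retractionQ s d u v u' v') (fun x => x - retractionQ s d u v u' v' x) ∧
      range (retractionQ s d u v u' v') = M ∧
      range (fun x => x - retractionQ s d u v u' v' x) = N := by
  have hQ : range (retractionQ s d u v u' v') = M := by
    refine Subset.antisymm (range_subset_iff.mpr C.retractionQ_mem) fun x hx => ?_
    exact ⟨x, C.retractionQ_eq_self hx⟩
  have hR : range (fun x => x - retractionQ s d u v u' v' x) = N := by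
    refine Subset.antisymm (range_subset_iff.mpr C.sub_retractionQ_mem) fun x hx => ?_
    exact ⟨x, by simp [C.retractionQ_eq_zero hx]⟩
  have hQR (x : ℝ × ℝ) := C.retractionQ_eq_zero (C.sub_retractionQ_mem x)
  have hRQ (x : ℝ × ℝ) := C.retractionQ_eq_self (C.retractionQ_mem x)
  refine ⟨⟨⟨C.continuous_retractionQ, fun _ ht => C.retractionQ_smul ht, hRQ, ?_⟩,
    ⟨?_, ?_, ?_, ?_⟩, fun x => add_sub_cancel _ x, hQR, fun x => by simp [hRQ]⟩, hQ, hR⟩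
  · rw [hQ]
    refine ⟨fun h => C.d_ne (by simpa [h] using C.d_mem), C.isClosed_M, C.cone_M.convex,
      C.cone_M.smul_mem, fun x hx => C.retractionQ_mem_frontier hx⟩
  · exact continuous_id.sub C.continuous_retractionQ
  · intro t ht x
    simp [C.retractionQ_smul ht, smul_sub]
  · intro x
    simp [hQR]
  · rw [hR]
    refine ⟨fun h => C.d_ne (by simpa [h] using C.neg_d_mem), C.isClosed_N, C.cone_N.convex,
      C.cone_N.smul_mem, fun x hx => C.sub_retractionQ_mem_frontier hx⟩



lemma eq_retractionQ {P R : ℝ × ℝ → ℝ × ℝ} (h : MutuallyPolar P R) (hP : range P = M)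
    (hR : range R = N) : P = retractionQ s d u v u' v' := by
  funext x
  by_cases hxM : x ∈ M
  · rw [C.retractionQ_eq_self hxM, h.1.apply_of_mem_range (hP ▸ hxM)]
  by_cases hxN : x ∈ N
  · rw [C.retractionQ_eq_zero hxN, h.apply_eq_zero_of_mem_range (hR ▸ hxN)]
  obtain ⟨t, a, b, a', b', C', hdx, hQ⟩ := C.exists_retractionQ_eq x
  rw [hQ, C'.eq_halfRetraction h hP hR hdx hxM hxN]

theorem existsUnique_mutuallyPolar : ∃! p : ((ℝ × ℝ) → ℝ × ℝ) × ((ℝ × ℝ) → ℝ × ℝ),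
    MutuallyPolar p.1 p.2 ∧ range p.1 = M ∧ range p.2 = N := by
  refine ⟨(retractionQ s d u v u' v', fun x => x - retractionQ s d u v u' v' x), C.mutuallyPolar,
    ?_⟩
  rintro ⟨P, R⟩ ⟨h, hP, hR⟩
  have hPQ : P = retractionQ s d u v u' v' := C.eq_retractionQ h hP hR
  refine Prod.ext hPQ (funext fun x => ?_)
  show R x = x - retractionQ s d u v u' v' x
  rw [← hPQ]
  exact eq_sub_of_add_eq' (h.add_apply x)

end Config

lemma Config.exists_of_mem_interior {M N : Set (ℝ × ℝ)} (hMc : IsClosed M) (hNc : IsClosed N)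
    (hM : IsConvexCone M) (hN : IsConvexCone N) (hMs : ∀ x ∈ M, -x ∈ M → x = 0)
    (hNs : ∀ x ∈ N, -x ∈ N → x = 0) (hMN : ∀ x ∈ M, x ∈ N → x = 0) {d : ℝ × ℝ} (hd0 : d ≠ 0)
    (hdM : d ∈ interior M) (hdN : -d ∈ N) : ∃ u v u' v', Config 1 M N d u v u' v' := by
  have hd : d ∈ M := interior_subset hdM
  have hnegd : -d ∉ M := fun h => hd0 (hMs d hd h)
  have hdnN : d ∉ N := fun h => hd0 (hMN d hd h)
  -- `u, u'` support `M` on the two sides of `d`, and `v, v'` support `N` on those of `-d`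
  obtain ⟨u, hu, hu0, -, hMu⟩ := hM.exists_supporting_ray (s := -1) hMc hnegd hd hd0 (by simp)
  obtain ⟨u', hu', hu'0, -, hMu'⟩ := hM.exists_supporting_ray (s := 1) hMc hnegd hd hd0 (by simp)
  obtain ⟨v, hv, hv0, hdv, hNv⟩ :=
    hN.exists_supporting_ray (s := 1) hNc hdnN hdN (neg_ne_zero.mpr hd0) (by simp)
  obtain ⟨v', hv', hv'0, hdv', hNv'⟩ :=
    hN.exists_supporting_ray (s := -1) hNc hdnN hdN (neg_ne_zero.mpr hd0) (by simp)
  have hMu₁ : ∀ x ∈ M, 0 ≤ area 1 x u := fun x hx => by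
    have := hMu x hx
    rw [area_neg_sign, area_swap] at this
    linarith
  have hMu'₁ : ∀ x ∈ M, 0 ≤ area 1 u' x := fun x hx => by
    have := hMu' x hx
    rw [area_swap] at this
    linarith
  refine ⟨u, v, u', v', hMc, hNc, hM, hN, hMs, hNs, hMN, hd, hdN, hu, hu', hv, hv', hv0, hv'0,
    area_pos_of_mem_interior one_ne_zero hu0 hMu₁ hdM, ?_, hdv, by simpa using hdv', hMu'₁, hMu₁,
    fun x hx => ?_, fun x hx => ?_⟩
  · simpa using area_pos_of_mem_interior (s := -1) (by norm_num) hu'0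
      (fun x hx => by simpa using hMu'₁ x hx) hdM
  · have := hNv x hx
    rw [area_swap] at this
    linarith
  · have := hNv' x hx
    rw [area_neg_sign, area_swap] at this
    linarith

theorem stmt3 (M N : Set (ℝ × ℝ))
    (hMc : IsClosed M) (hNc : IsClosed N)
    (hMconv : Convex ℝ M) (hNconv : Convex ℝ N)
    (hMcone : ∀ t : ℝ, 0 ≤ t → ∀ x ∈ M, t • x ∈ M)
    (hNcone : ∀ t : ℝ, 0 ≤ t → ∀ x ∈ N, t • x ∈ N)
    (hMp : M ∩ (-M) = {0}) (hNp : N ∩ (-N) = {0})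
    (h : Transversal M N) :
    ∃! p : ((ℝ × ℝ) → ℝ × ℝ) × ((ℝ × ℝ) → ℝ × ℝ),
      MutuallyPolar p.1 p.2 ∧ Set.range p.1 = M ∧ Set.range p.2 = N := by
  have hM := IsConvexCone.of_convex hMconv hMcone
  have hN := IsConvexCone.of_convex hNconv hNcone
  have hMs : ∀ x ∈ M, -x ∈ M → x = 0 := fun x hx hx' => hMp.subset ⟨hx, hx'⟩
  have hNs : ∀ x ∈ N, -x ∈ N → x = 0 := fun x hx hx' => hNp.subset ⟨hx, hx'⟩
  obtain ⟨Δ, hΔ⟩ := h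
  have hMN : ∀ x ∈ M, x ∈ N → x = 0 := fun x hx hx' => hΔ.1.subset ⟨hx, hx'⟩
  obtain ⟨d, hd0, ⟨hdM, hdN⟩ | ⟨hdN, hdM⟩⟩ :=
    exists_mem_interior_of_transversalWith hM hN hMs hNs hΔ
  · obtain ⟨u, v, u', v', C⟩ :=
      Config.exists_of_mem_interior hMc hNc hM hN hMs hNs hMN hd0 hdM hdN
    exact C.existsUnique_mutuallyPolar
  · obtain ⟨u, v, u', v', C⟩ := Config.exists_of_mem_interior hNc hMc hN hM hNs hMs
      (fun x hx hx' => hMN x hx' hx) hd0 hdN hdM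
    exact existsUnique_mutuallyPolar_comm C.existsUnique_mutuallyPolar
end

section
/- Suppose Q and R are mutually polar retractions on a Banach space X with M = range Q, N = range R, dim N = 1, and int M ≠ ∅. Then M and N are transversal cones with transversal line span(N); in particular span(N) ∩ int M ≠ ∅. -/
open Set

variable {X : Type*} [NormedAddCommGroup X] [NormedSpace ℝ X]

/-!
Since `Q + R = I`, every point of `X` lies in `range Q + span (range R)`. If the line
`span (range R)` missed `interior (range Q)`, Hahn–Banach would give a functional separating
the two; it vanishes on the line and is bounded above on `range Q ⊆ closure (interior (range Q))`,
hence on all of `X`, so it is zero, which is absurd. The point found is nonzero because a cone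
with `0` in its interior is the whole space, and would then meet `range R` outside `0`.
-/

open Pointwise

section LinearFunctional

variable {E : Type*} [AddCommGroup E] [Module ℝ E]

theorem LinearMap.eq_zero_of_forall_mem_le (f : E →ₗ[ℝ] ℝ) {p : Submodule ℝ E} {c : ℝ}
    (hf : ∀ x ∈ p, f x ≤ c) {x : E} (hx : x ∈ p) : f x = 0 := by
  by_contra hfx
  have := hf (((|c| + 1) / f x) • x) (p.smul_mem _ hx)
  rw [map_smul, smul_eq_mul, div_mul_cancel₀ _ hfx] at this
  linarith [le_abs_self c]

end LinearFunctional

section TopologicalVectorSpace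

variable {E : Type*} [TopologicalSpace E] [AddCommGroup E] [Module ℝ E] [ContinuousSMul ℝ E]

theorem eq_univ_of_zero_mem_interior_of_smul_mem {s : Set E}
    (hcone : ∀ t : ℝ, 0 ≤ t → ∀ y ∈ s, t • y ∈ s) (h0 : (0 : E) ∈ interior s) : s = univ := by
  refine eq_univ_of_forall fun x ↦ ?_
  have hsmall : ∀ᶠ c : ℝ in nhdsWithin 0 (Ioi 0), c • x ∈ s :=
    ((absorbent_nhds_zero (𝕜 := ℝ) (mem_interior_iff_mem_nhds.1 h0)).eventually_nhdsNE_zero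
      x).filter_mono (nhdsGT_le_nhdsNE 0)
  obtain ⟨c, hcx, hc⟩ := (hsmall.and self_mem_nhdsWithin).exists
  simpa [smul_smul, inv_mul_cancel₀ (ne_of_gt hc)] using hcone c⁻¹ (inv_nonneg.2 hc.le) _ hcx

variable [IsTopologicalAddGroup E]

theorem Submodule.inter_interior_nonempty_of_add_eq_univ {s : Set E} (hs : Convex ℝ s)
    (hint : (interior s).Nonempty) (Δ : Submodule ℝ E) (hcover : s + (Δ : Set E) = univ) :
    ((Δ : Set E) ∩ interior s).Nonempty := by
  by_contra hdisj
  obtain ⟨f, u, hf_int, hf_Δ⟩ := geometric_hahn_banach_open hs.interior isOpen_interior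
    Δ.convex (disjoint_iff_inter_eq_empty.2 <| by rwa [inter_comm, ← not_nonempty_iff_eq_empty])
  have hu : u ≤ 0 := by simpa using hf_Δ 0 Δ.zero_mem
  have hf_Δ_zero : ∀ d ∈ Δ, f d = 0 := fun d hd ↦ by
    simpa using (f : E →ₗ[ℝ] ℝ).eq_zero_of_forall_mem_le (c := -u)
      (fun y hy ↦ by
        have := hf_Δ (-y) (Δ.neg_mem hy)
        simp only [ContinuousLinearMap.coe_coe, map_neg] at this ⊢
        linarith) hd
  have hf_s : ∀ m ∈ s, f m ≤ u := by
    have hclosed : IsClosed {x | f x ≤ u} := isClosed_le f.continuous continuous_const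
    intro m hm
    refine closure_minimal (fun y hy ↦ (hf_int y hy).le) hclosed ?_
    rw [hs.closure_interior_eq_closure_of_nonempty_interior hint]
    exact subset_closure hm
  have hf_zero : ∀ x, f x = 0 := fun x ↦
    (f : E →ₗ[ℝ] ℝ).eq_zero_of_forall_mem_le (p := ⊤) (c := u) (fun y _ ↦ by
        obtain ⟨m, hm, d, hd, rfl⟩ := hcover.symm ▸ mem_univ y
        simpa [hf_Δ_zero d hd] using hf_s m hm) Submodule.mem_top
  obtain ⟨a, ha⟩ := hint
  linarith [hf_int a ha, hf_zero a]

end TopologicalVectorSpace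

namespace IsRetraction

variable {T : X → X}

theorem convex_range (hT : IsRetraction T) : Convex ℝ (range T) := hT.2.2.2.2.2.1

theorem smul_mem_range (hT : IsRetraction T) : ∀ t : ℝ, 0 ≤ t → ∀ y ∈ range T, t • y ∈ range T :=
  hT.2.2.2.2.2.2.1

theorem map_zero (hT : IsRetraction T) : T 0 = 0 := by
  simpa using hT.2.1 0 le_rfl 0

theorem exists_mem_range_ne_zero (hT : IsRetraction T) : ∃ v ∈ range T, v ≠ 0 := by
  by_contra! h
  exact hT.2.2.2.1 (eq_singleton_iff_unique_mem.2 ⟨⟨0, hT.map_zero⟩, h⟩)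

end IsRetraction

namespace MutuallyPolar

variable {Q R : X → X}

theorem isRetraction_left (h : MutuallyPolar Q R) : IsRetraction Q := h.1

theorem isRetraction_right (h : MutuallyPolar Q R) : IsRetraction R := h.2.1

theorem range_inter_range (h : MutuallyPolar Q R) : range Q ∩ range R = {0} := by
  obtain ⟨hQ, hR, -, hQR, -⟩ := h
  refine subset_antisymm ?_ (singleton_subset_iff.2 ⟨⟨0, hQ.map_zero⟩, ⟨0, hR.map_zero⟩⟩)
  rintro _ ⟨⟨a, rfl⟩, ⟨b, hb⟩⟩
  rw [mem_singleton_iff, ← hQ.2.2.1 a, ← hb, hQR]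

theorem range_add_span_range (h : MutuallyPolar Q R) :
    range Q + (Submodule.span ℝ (range R) : Set X) = univ :=
  eq_univ_of_forall fun x ↦
    ⟨Q x, mem_range_self x, R x, Submodule.subset_span (mem_range_self x), h.2.2.1 x⟩

theorem zero_notMem_interior_range (h : MutuallyPolar Q R) : (0 : X) ∉ interior (range Q) := by
  intro h0
  obtain ⟨v, hvR, hv0⟩ := h.isRetraction_right.exists_mem_range_ne_zero
  have hvQ : v ∈ range Q := by
    rw [eq_univ_of_zero_mem_interior_of_smul_mem h.isRetraction_left.smul_mem_range h0]
    exact mem_univ v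
  exact hv0 (h.range_inter_range ▸ ⟨hvQ, hvR⟩ : v ∈ ({0} : Set X))

end MutuallyPolar

theorem stmt5_general (Q R : X → X) (h : MutuallyPolar Q R)
    (hdim : Module.finrank ℝ (Submodule.span ℝ (Set.range R)) = 1)
    (hint : (interior (Set.range Q)).Nonempty) :
    TransversalWith (Set.range Q) (Set.range R) (Submodule.span ℝ (Set.range R)) ∧
    (((Submodule.span ℝ (Set.range R) : Submodule ℝ X) : Set X) ∩
        interior (Set.range Q)).Nonempty := by
  obtain ⟨v, hvR, hv0⟩ := h.isRetraction_right.exists_mem_range_ne_zero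
  have hvΔ : v ∈ Submodule.span ℝ (range R) := Submodule.subset_span hvR
  obtain ⟨p, hpΔ, hpint⟩ := (Submodule.span ℝ (range R)).inter_interior_nonempty_of_add_eq_univ
    h.isRetraction_left.convex_range hint h.range_add_span_range
  have hp0 : p ≠ 0 := fun hp ↦ h.zero_notMem_interior_range (hp ▸ hpint)
  exact ⟨⟨h.range_inter_range, ⟨v, hv0, eq_span_singleton_of_mem_of_finrank_eq_one hdim hvΔ hv0⟩,
    ⟨p, hpΔ, interior_subset hpint, hp0⟩, ⟨v, hvΔ, hvR, hv0⟩, ⟨p, hpΔ, Or.inl hpint⟩⟩,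
    ⟨p, hpΔ, hpint⟩⟩

theorem stmt5 [CompleteSpace X] (Q R : X → X) (h : MutuallyPolar Q R)
    (hdim : Module.finrank ℝ (Submodule.span ℝ (Set.range R)) = 1)
    (hint : (interior (Set.range Q)).Nonempty) :
    TransversalWith (Set.range Q) (Set.range R) (Submodule.span ℝ (Set.range R)) ∧
    (((Submodule.span ℝ (Set.range R) : Submodule ℝ X) : Set X) ∩
        interior (Set.range Q)).Nonempty :=
  stmt5_general Q R h hdim hint
end
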